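/- arXiv:1902.04567 — 3 statements merged into one kernel-verified Lean document; each statement's English description precedes it below -/
import Mathlib

section
/- Convexity is preserved by the Bellman operator: if V : 𝔅 × [0,1] → ℝ is bounded and for every b ∈ 𝔅 the map p ↦ V(b,p) is convex on [0,1], then for every b ∈ 𝔅 the map p ↦ (𝒯V)(b,p) is convex on [0,1]. -/
namespace EH

/-- Parameters of the energy-harvesting communication model. -/
structure Params where
  k : ℕ
  Bmax : ℕ
  lam0 : ℝ
  lam1 : ℝ
  q : ℝ
  R : ℝ
  beta : ℝ
  hk : 2 ≤ k
  hBmax : 1 ≤ Bmax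
  hlam0 : lam0 ∈ Set.Icc (0:ℝ) 1
  hlam1 : lam1 ∈ Set.Icc (0:ℝ) 1
  hq : q ∈ Set.Icc (0:ℝ) 1
  hR : 0 < R
  hbeta : beta ∈ Set.Ico (0:ℝ) 1

namespace Params

/-- Sensing cost τ = 1/k. -/
noncomputable def tau (P : Params) : ℝ := 1 / (P.k : ℝ)

/-- Battery state space: the grid {jτ : j = 0,1,…,k·Bmax}. -/
def Batt (P : Params) : Set ℝ :=
  {b : ℝ | ∃ j : ℕ, j ≤ P.k * P.Bmax ∧ b = (j : ℝ) * P.tau}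

/-- Belief space [0,1]. -/
def Belief : Set ℝ := Set.Icc (0:ℝ) 1

/-- Belief update map J(p) = λ0(1−p) + λ1 p. -/
def J (P : Params) (p : ℝ) : ℝ := P.lam0 * (1 - p) + P.lam1 * p

/-- Action value of deferring (D). -/
noncomputable def QD (P : Params) (V : ℝ → ℝ → ℝ) (b p : ℝ) : ℝ :=
  P.beta * (P.q * V (min (b + 1) (P.Bmax : ℝ)) (P.J p) + (1 - P.q) * V b (P.J p))

/-- Action value of sensing and transmitting opportunistically (O). -/
noncomputable def QO (P : Params) (V : ℝ → ℝ → ℝ) (b p : ℝ) : ℝ :=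
  if 1 ≤ b then
    p * ((1 - P.tau) * P.R
        + P.beta * (P.q * V b P.lam1 + (1 - P.q) * V (b - 1) P.lam1))
      + (1 - p) * (P.beta * (P.q * V (min (b - P.tau + 1) (P.Bmax : ℝ)) P.lam0
        + (1 - P.q) * V (b - P.tau) P.lam0))
  else
    P.beta * (P.q * p * V (b - P.tau + 1) P.lam1
      + P.q * (1 - p) * V (b - P.tau + 1) P.lam0
      + (1 - P.q) * p * V (b - P.tau) P.lam1
      + (1 - P.q) * (1 - p) * V (b - P.tau) P.lam0)

/-- Action value of transmitting without sensing (T). -/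
noncomputable def QT (P : Params) (V : ℝ → ℝ → ℝ) (b p : ℝ) : ℝ :=
  p * (P.R + P.beta * (P.q * V b P.lam1 + (1 - P.q) * V (b - 1) P.lam1))
    + (1 - p) * (P.beta * (P.q * V b P.lam0 + (1 - P.q) * V (b - 1) P.lam0))

/-- Bellman operator 𝒯: max over the available actions (D always; O iff b ≥ τ; T iff b ≥ 1). -/
noncomputable def bellman (P : Params) (V : ℝ → ℝ → ℝ) (b p : ℝ) : ℝ :=
  if 1 ≤ b then max (P.QD V b p) (max (P.QO V b p) (P.QT V b p))
  else if P.tau ≤ b then max (P.QD V b p) (P.QO V b p)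
  else P.QD V b p

/-- Boundedness of a value function on the state space 𝔅 × [0,1]. -/
def Bdd (P : Params) (V : ℝ → ℝ → ℝ) : Prop :=
  ∃ M : ℝ, ∀ b ∈ P.Batt, ∀ p ∈ Belief, |V b p| ≤ M

/-- V is a fixed point of the Bellman operator on 𝔅 × [0,1]. -/
def IsFixed (P : Params) (V : ℝ → ℝ → ℝ) : Prop :=
  ∀ b ∈ P.Batt, ∀ p ∈ Belief, P.bellman V b p = V b p

/-- Supremum distance over the state space 𝔅 × [0,1]. -/
noncomputable def supDist (P : Params) (V W : ℝ → ℝ → ℝ) : ℝ :=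
  sSup {x : ℝ | ∃ b ∈ P.Batt, ∃ p ∈ Belief, x = |V b p - W b p|}

end Params

open Params

/-! The deferral value is a nonnegative combination of convex slices composed with the affine
belief update `J`, which maps `[0,1]` into itself; the two transmission values are affine in the
belief, since after transmitting the belief resets to `λ0` or `λ1`. A maximum of convex functions is
convex. -/

lemma convexOn_of_affine {s : Set ℝ} (hs : Convex ℝ s) {f : ℝ → ℝ} (C D : ℝ)
    (hf : ∀ p, f p = p * C + (1 - p) * D) : ConvexOn ℝ s f := by
  have h := ((convexOn_id convex_univ).comp_affineMap (AffineMap.lineMap D C)).subset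
    (Set.subset_univ s) hs
  refine h.congr fun p _ => ?_
  rw [hf, Function.comp_apply, id, AffineMap.lineMap_apply_ring]
  ring

namespace Params

open Set AffineMap

variable (P : Params)

lemma min_add_one_mem_Batt {b : ℝ} (hb : b ∈ P.Batt) : min (b + 1) (P.Bmax : ℝ) ∈ P.Batt := by
  obtain ⟨j, -, rfl⟩ := hb
  have hτ : 0 < P.tau := one_div_pos.mpr (by have := P.hk; positivity)
  have hkτ : (P.k : ℝ) * P.tau = 1 := by
    rw [tau, mul_one_div, div_self (by have := P.hk; positivity)]
  refine ⟨min (j + P.k) (P.k * P.Bmax), Nat.min_le_right _ _, ?_⟩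
  have h_succ : (j : ℝ) * P.tau + 1 = ((j : ℝ) + P.k) * P.tau := by linear_combination -hkτ
  have h_Bmax : (P.Bmax : ℝ) = ((P.k : ℝ) * P.Bmax) * P.tau := by
    linear_combination (-(P.Bmax : ℝ)) * hkτ
  rw [h_succ, h_Bmax, ← min_mul_of_nonneg _ _ hτ.le]
  push_cast
  rfl

lemma J_eq_lineMap : P.J = lineMap P.lam0 P.lam1 := by
  funext p
  rw [lineMap_apply_ring, J]
  ring

lemma mapsTo_J : MapsTo P.J (Icc 0 1) (Icc 0 1) := fun _ hp => by
  rw [J_eq_lineMap]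
  exact (convex_Icc 0 1).lineMap_mem P.hlam0 P.hlam1 hp

lemma _root_.ConvexOn.comp_J {f : ℝ → ℝ} (hf : ConvexOn ℝ (Icc 0 1) f) :
    ConvexOn ℝ (Icc 0 1) (fun p => f (P.J p)) := by
  have hmaps : Icc (0 : ℝ) 1 ⊆ lineMap P.lam0 P.lam1 ⁻¹' Icc 0 1 :=
    P.J_eq_lineMap ▸ P.mapsTo_J
  rw [J_eq_lineMap]
  exact (hf.comp_affineMap _).subset hmaps (convex_Icc 0 1)

lemma convexOn_QD {V : ℝ → ℝ → ℝ} {b : ℝ}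
    (h_charged : ConvexOn ℝ (Icc 0 1) (V (min (b + 1) (P.Bmax : ℝ))))
    (h_same : ConvexOn ℝ (Icc 0 1) (V b)) :
    ConvexOn ℝ (Icc 0 1) (fun p => P.QD V b p) := by
  have hβ := P.hbeta.1
  obtain ⟨hq₀, hq₁⟩ := P.hq
  have h := ((h_charged.comp_J P).smul (mul_nonneg hβ hq₀)).add
    ((h_same.comp_J P).smul (mul_nonneg hβ (sub_nonneg.mpr hq₁)))
  refine h.congr fun p _ => ?_
  simp only [QD, Pi.add_apply, smul_eq_mul]
  ring

lemma convexOn_QO {s : Set ℝ} (hs : Convex ℝ s) (V : ℝ → ℝ → ℝ) (b : ℝ) :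
    ConvexOn ℝ s (fun p => P.QO V b p) := by
  unfold QO
  split_ifs
  · exact convexOn_of_affine hs _ _ fun _ => rfl
  · exact convexOn_of_affine hs
      (P.beta * (P.q * V (b - P.tau + 1) P.lam1 + (1 - P.q) * V (b - P.tau) P.lam1))
      (P.beta * (P.q * V (b - P.tau + 1) P.lam0 + (1 - P.q) * V (b - P.tau) P.lam0))
      fun _ => by ring

lemma convexOn_QT {s : Set ℝ} (hs : Convex ℝ s) (V : ℝ → ℝ → ℝ) (b : ℝ) :
    ConvexOn ℝ s (fun p => P.QT V b p) :=
  convexOn_of_affine hs _ _ fun _ => rfl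

end Params

theorem stmt5_general (P : Params) (V : ℝ → ℝ → ℝ)
    (hconv : ∀ b ∈ P.Batt, ConvexOn ℝ (Set.Icc (0:ℝ) 1) (fun p => V b p)) :
    ∀ b ∈ P.Batt, ConvexOn ℝ (Set.Icc (0:ℝ) 1) (fun p => P.bellman V b p) := by
  intro b hb
  have hD := P.convexOn_QD (hconv _ (P.min_add_one_mem_Batt hb)) (hconv b hb)
  have hO := P.convexOn_QO (convex_Icc 0 1) V b
  have hT := P.convexOn_QT (convex_Icc 0 1) V b
  unfold bellman
  split_ifs
  · exact hD.sup (hO.sup hT)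
  · exact hD.sup hO
  · exact hD

/-- Convexity in the belief is preserved by the Bellman operator. -/
theorem stmt5 (P : Params) (V : ℝ → ℝ → ℝ) (hV : P.Bdd V)
    (hconv : ∀ b ∈ P.Batt, ConvexOn ℝ (Set.Icc (0:ℝ) 1) (fun p => V b p)) :
    ∀ b ∈ P.Batt, ConvexOn ℝ (Set.Icc (0:ℝ) 1) (fun p => P.bellman V b p) :=
  stmt5_general P V hconv

end EH
end

section
/- (Lemma 1) For every b ∈ 𝔅, the optimal value function p ↦ V*(b,p) is convex on [0,1]. -/
namespace EH

open Params

/-! ### Auxiliary lemmas -/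

section Aux

variable (P : Params)

lemma aux_kpos : (0:ℝ) < (P.k : ℝ) := by
  have : (0:ℕ) < P.k := lt_of_lt_of_le (by norm_num) P.hk
  exact_mod_cast this

/-- Closure: min(b+1, Bmax) stays on the battery grid. -/
lemma aux_batt_closed {b : ℝ} (hb : b ∈ P.Batt) :
    min (b + 1) (P.Bmax : ℝ) ∈ P.Batt := by
  obtain ⟨j, hj, rfl⟩ := hb
  have hk0 : (P.k:ℝ) ≠ 0 := (aux_kpos P).ne'
  refine ⟨min (j + P.k) (P.k * P.Bmax), min_le_right _ _, ?_⟩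
  have h1 : (j:ℝ) * P.tau + 1 = ((j + P.k : ℕ):ℝ) * P.tau := by
    push_cast [Params.tau]; field_simp
  have h2 : ((P.Bmax:ℕ):ℝ) = ((P.k * P.Bmax : ℕ):ℝ) * P.tau := by
    push_cast [Params.tau]; field_simp
  rw [h1, h2]
  have htau0 : 0 ≤ P.tau := le_of_lt (by rw [Params.tau]; positivity)
  rw [← min_mul_of_nonneg _ _ htau0]
  push_cast [Nat.cast_min]
  ring_nf

/-- J maps [0,1] into [0,1]. -/
lemma aux_J_mem {p : ℝ} (hp : p ∈ Set.Icc (0:ℝ) 1) : P.J p ∈ Set.Icc (0:ℝ) 1 := by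
  obtain ⟨h0, h1⟩ := hp
  have l00 := P.hlam0.1; have l01 := P.hlam0.2
  have l10 := P.hlam1.1; have l11 := P.hlam1.2
  constructor
  · have := mul_nonneg l00 (by linarith : (0:ℝ) ≤ 1 - p)
    have := mul_nonneg l10 h0
    simp only [J]; linarith
  · have h2 := mul_le_mul_of_nonneg_right l01 (by linarith : (0:ℝ) ≤ 1 - p)
    have h3 := mul_le_mul_of_nonneg_right l11 h0
    simp only [J]; linarith

/-- Composition with the affine map J preserves convexity. -/
lemma aux_comp_J {f : ℝ → ℝ} (hf : ConvexOn ℝ (Set.Icc (0:ℝ) 1) f) :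
    ConvexOn ℝ (Set.Icc (0:ℝ) 1) (fun p => f (P.J p)) := by
  refine ⟨convex_Icc _ _, fun x hx y hy a c ha hc hac => ?_⟩
  have hJ : P.J (a • x + c • y) = a • P.J x + c • P.J y := by
    simp only [smul_eq_mul, J]
    have hc' : c = 1 - a := by linarith
    subst hc'; ring
  show f (P.J (a • x + c • y)) ≤ a • f (P.J x) + c • f (P.J y)
  rw [hJ]
  exact hf.2 (aux_J_mem P hx) (aux_J_mem P hy) ha hc hac

lemma aux_QT_convex (V : ℝ → ℝ → ℝ) (b : ℝ) :
    ConvexOn ℝ (Set.Icc (0:ℝ) 1) (fun p => P.QT V b p) := by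
  refine ⟨convex_Icc _ _, fun x hx y hy a c ha hc hac => le_of_eq ?_⟩
  simp only [QT, smul_eq_mul]
  have hc' : c = 1 - a := by linarith
  subst hc'; ring

lemma aux_QO_convex (V : ℝ → ℝ → ℝ) (b : ℝ) :
    ConvexOn ℝ (Set.Icc (0:ℝ) 1) (fun p => P.QO V b p) := by
  by_cases hb : 1 ≤ b
  · refine ⟨convex_Icc _ _, fun x hx y hy a c ha hc hac => le_of_eq ?_⟩
    simp only [QO, if_pos hb, smul_eq_mul]
    have hc' : c = 1 - a := by linarith
    subst hc'; ring
  · refine ⟨convex_Icc _ _, fun x hx y hy a c ha hc hac => le_of_eq ?_⟩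
    simp only [QO, if_neg hb, smul_eq_mul]
    have hc' : c = 1 - a := by linarith
    subst hc'; ring

lemma aux_QD_convex (V : ℝ → ℝ → ℝ) (b : ℝ)
    (h1 : ConvexOn ℝ (Set.Icc (0:ℝ) 1) (fun p => V (min (b + 1) (P.Bmax : ℝ)) p))
    (h2 : ConvexOn ℝ (Set.Icc (0:ℝ) 1) (fun p => V b p)) :
    ConvexOn ℝ (Set.Icc (0:ℝ) 1) (fun p => P.QD V b p) := by
  have g1 := aux_comp_J P h1
  have g2 := aux_comp_J P h2
  refine ⟨convex_Icc _ _, fun x hx y hy a c ha hc hac => ?_⟩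
  have i1 := g1.2 hx hy ha hc hac
  have i2 := g2.2 hx hy ha hc hac
  simp only [smul_eq_mul] at i1 i2 ⊢
  simp only [QD]
  have hb0 := P.hbeta.1
  have hq0 := P.hq.1
  have hq1 := P.hq.2
  have hbq : 0 ≤ P.beta * P.q := mul_nonneg hb0 hq0
  have hbq' : 0 ≤ P.beta * (1 - P.q) := mul_nonneg hb0 (by linarith)
  nlinarith [mul_le_mul_of_nonneg_left i1 hbq, mul_le_mul_of_nonneg_left i2 hbq']

lemma aux_bellman_convex (V : ℝ → ℝ → ℝ) (b : ℝ)
    (h1 : ConvexOn ℝ (Set.Icc (0:ℝ) 1) (fun p => V (min (b + 1) (P.Bmax : ℝ)) p))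
    (h2 : ConvexOn ℝ (Set.Icc (0:ℝ) 1) (fun p => V b p)) :
    ConvexOn ℝ (Set.Icc (0:ℝ) 1) (fun p => P.bellman V b p) := by
  have hD := aux_QD_convex P V b h1 h2
  have hO := aux_QO_convex P V b
  have hT := aux_QT_convex P V b
  by_cases hb1 : 1 ≤ b
  · simp only [bellman, if_pos hb1]
    exact hD.sup (hO.sup hT)
  · by_cases hb2 : P.tau ≤ b
    · simp only [bellman, if_neg hb1, if_pos hb2]
      exact hD.sup hO
    · simp only [bellman, if_neg hb1, if_neg hb2]
      exact hD

/-- A convex combination of four bounded quantities is bounded. -/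
lemma aux_abs_combo {a b c d x1 x2 x3 x4 C : ℝ}
    (ha : 0 ≤ a) (hb : 0 ≤ b) (hc : 0 ≤ c) (hd : 0 ≤ d)
    (hsum : a + b + c + d = 1)
    (h1 : |x1| ≤ C) (h2 : |x2| ≤ C) (h3 : |x3| ≤ C) (h4 : |x4| ≤ C) :
    |a * x1 + b * x2 + c * x3 + d * x4| ≤ C := by
  rw [abs_le] at h1 h2 h3 h4 ⊢
  have e : a * C + b * C + c * C + d * C = C := by linear_combination C * hsum
  constructor
  · nlinarith [mul_le_mul_of_nonneg_left h1.1 ha, mul_le_mul_of_nonneg_left h2.1 hb,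
      mul_le_mul_of_nonneg_left h3.1 hc, mul_le_mul_of_nonneg_left h4.1 hd]
  · nlinarith [mul_le_mul_of_nonneg_left h1.2 ha, mul_le_mul_of_nonneg_left h2.2 hb,
      mul_le_mul_of_nonneg_left h3.2 hc, mul_le_mul_of_nonneg_left h4.2 hd]

/-- Pointwise contraction of the Bellman operator (belief arguments remain in [0,1]). -/
lemma aux_bellman_contract (V W : ℝ → ℝ → ℝ) (C : ℝ)
    (H : ∀ b p, p ∈ Set.Icc (0:ℝ) 1 → |V b p - W b p| ≤ C) :
    ∀ b p, p ∈ Set.Icc (0:ℝ) 1 → |P.bellman V b p - P.bellman W b p| ≤ P.beta * C := by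
  intro b p hp
  have hp0 := hp.1
  have hp1 := hp.2
  have hq0 := P.hq.1
  have hq1 := P.hq.2
  have hb0 := P.hbeta.1
  have hJp := aux_J_mem P hp
  have habsb : ∀ s : ℝ, |s| ≤ C → |P.beta * s| ≤ P.beta * C := by
    intro s hs
    rw [abs_mul, abs_of_nonneg hb0]
    exact mul_le_mul_of_nonneg_left hs hb0
  -- D action
  have hDc : |P.QD V b p - P.QD W b p| ≤ P.beta * C := by
    have heq : P.QD V b p - P.QD W b p
        = P.beta * (P.q * (V (min (b+1) (P.Bmax:ℝ)) (P.J p) - W (min (b+1) (P.Bmax:ℝ)) (P.J p))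
          + (1 - P.q) * (V b (P.J p) - W b (P.J p))
          + 0 * 0 + 0 * 0) := by
      simp only [QD]; ring
    rw [heq]
    apply habsb
    refine aux_abs_combo hq0 (by linarith) le_rfl le_rfl (by ring) (H _ _ hJp) (H _ _ hJp)
      (by simpa using le_trans (abs_nonneg _) (H b p hp)) ?_
    simpa using le_trans (abs_nonneg _) (H b p hp)
  -- T action
  have hTc : |P.QT V b p - P.QT W b p| ≤ P.beta * C := by
    have heq : P.QT V b p - P.QT W b p
        = P.beta * ((p * P.q) * (V b P.lam1 - W b P.lam1)
          + (p * (1 - P.q)) * (V (b-1) P.lam1 - W (b-1) P.lam1)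
          + ((1-p) * P.q) * (V b P.lam0 - W b P.lam0)
          + ((1-p) * (1 - P.q)) * (V (b-1) P.lam0 - W (b-1) P.lam0)) := by
      simp only [QT]; ring
    rw [heq]
    apply habsb
    exact aux_abs_combo (by positivity) (mul_nonneg hp0 (by linarith))
      (mul_nonneg (by linarith) hq0) (mul_nonneg (by linarith) (by linarith)) (by ring)
      (H _ _ P.hlam1) (H _ _ P.hlam1) (H _ _ P.hlam0) (H _ _ P.hlam0)
  -- O action
  have hOc : |P.QO V b p - P.QO W b p| ≤ P.beta * C := by
    by_cases hb1 : 1 ≤ b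
    · have heq : P.QO V b p - P.QO W b p
          = P.beta * ((p * P.q) * (V b P.lam1 - W b P.lam1)
            + (p * (1 - P.q)) * (V (b-1) P.lam1 - W (b-1) P.lam1)
            + ((1-p) * P.q) * (V (min (b - P.tau + 1) (P.Bmax:ℝ)) P.lam0
                - W (min (b - P.tau + 1) (P.Bmax:ℝ)) P.lam0)
            + ((1-p) * (1 - P.q)) * (V (b - P.tau) P.lam0 - W (b - P.tau) P.lam0)) := by
        simp only [QO, if_pos hb1]; ring
      rw [heq]
      apply habsb
      exact aux_abs_combo (by positivity) (mul_nonneg hp0 (by linarith))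
        (mul_nonneg (by linarith) hq0) (mul_nonneg (by linarith) (by linarith)) (by ring)
        (H _ _ P.hlam1) (H _ _ P.hlam1) (H _ _ P.hlam0) (H _ _ P.hlam0)
    · have heq : P.QO V b p - P.QO W b p
          = P.beta * ((P.q * p) * (V (b - P.tau + 1) P.lam1 - W (b - P.tau + 1) P.lam1)
            + (P.q * (1-p)) * (V (b - P.tau + 1) P.lam0 - W (b - P.tau + 1) P.lam0)
            + ((1 - P.q) * p) * (V (b - P.tau) P.lam1 - W (b - P.tau) P.lam1)
            + ((1 - P.q) * (1-p)) * (V (b - P.tau) P.lam0 - W (b - P.tau) P.lam0)) := by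
        simp only [QO, if_neg hb1]; ring
      rw [heq]
      apply habsb
      exact aux_abs_combo (by positivity) (mul_nonneg hq0 (by linarith))
        (mul_nonneg (by linarith) hp0) (mul_nonneg (by linarith) (by linarith)) (by ring)
        (H _ _ P.hlam1) (H _ _ P.hlam0) (H _ _ P.hlam1) (H _ _ P.hlam0)
  by_cases hb1 : 1 ≤ b
  · simp only [bellman, if_pos hb1]
    refine le_trans (abs_max_sub_max_le_max _ _ _ _) (max_le hDc ?_)
    exact le_trans (abs_max_sub_max_le_max _ _ _ _) (max_le hOc hTc)
  · by_cases hb2 : P.tau ≤ b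
    · simp only [bellman, if_neg hb1, if_pos hb2]
      exact le_trans (abs_max_sub_max_le_max _ _ _ _) (max_le hDc hOc)
    · simp only [bellman, if_neg hb1, if_neg hb2]
      exact hDc

end Aux

open Classical in
/-- Value iteration relative to a reference function `Vs` (kept fixed off the battery grid). -/
noncomputable def iterV (P : Params) (Vs : ℝ → ℝ → ℝ) : ℕ → ℝ → ℝ → ℝ
  | 0 => fun b p => if b ∈ P.Batt then 0 else Vs b p
  | n+1 => fun b p => if b ∈ P.Batt then P.bellman (iterV P Vs n) b p else Vs b p


/-- (Lemma 1) For every b ∈ 𝔅, the optimal value function p ↦ V⋆(b,p) is convex on [0,1]. -/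
theorem stmt6 (P : Params) (Vstar : ℝ → ℝ → ℝ)
    (hBdd : P.Bdd Vstar) (hFix : P.IsFixed Vstar) :
    ∀ b ∈ P.Batt, ConvexOn ℝ (Set.Icc (0:ℝ) 1) (fun p => Vstar b p) := by
  classical
  obtain ⟨M0, hM0⟩ := hBdd
  set M : ℝ := max M0 0 with hM
  have hMnn : 0 ≤ M := le_max_right _ _
  have hb0 := P.hbeta.1
  have hb1 := P.hbeta.2
  -- the two key properties of the iterates
  have key : ∀ n : ℕ,
      (∀ b ∈ P.Batt, ConvexOn ℝ (Set.Icc (0:ℝ) 1) (fun p => iterV P Vstar n b p))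
      ∧ (∀ b p, p ∈ Set.Icc (0:ℝ) 1 → |iterV P Vstar n b p - Vstar b p| ≤ P.beta ^ n * M) := by
    intro n
    induction n with
    | zero =>
      constructor
      · intro b hb
        simp only [iterV, if_pos hb]
        exact convexOn_const 0 (convex_Icc 0 1)
      · intro b p hp
        by_cases hb : b ∈ P.Batt
        · simp only [iterV, if_pos hb, pow_zero, one_mul, zero_sub, abs_neg]
          exact le_trans (hM0 b hb p hp) (le_max_left _ _)
        · simp only [iterV, if_neg hb, sub_self, abs_zero, pow_zero, one_mul]
          exact hMnn
    | succ n ih =>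
      constructor
      · intro b hb
        simp only [iterV, if_pos hb]
        exact aux_bellman_convex P _ b (ih.1 _ (aux_batt_closed P hb)) (ih.1 _ hb)
      · intro b p hp
        by_cases hb : b ∈ P.Batt
        · simp only [iterV, if_pos hb]
          have hfix := hFix b hb p hp
          calc |P.bellman (iterV P Vstar n) b p - Vstar b p|
              = |P.bellman (iterV P Vstar n) b p - P.bellman Vstar b p| := by rw [hfix]
            _ ≤ P.beta * (P.beta ^ n * M) :=
                aux_bellman_contract P _ _ _ (fun b' p' hp' => ih.2 b' p' hp') b p hp
            _ = P.beta ^ (n+1) * M := by ring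
        · simp only [iterV, if_neg hb, sub_self, abs_zero]
          exact mul_nonneg (pow_nonneg hb0 _) hMnn
  -- convergence of the iterates to Vstar
  have tend : ∀ b, ∀ p ∈ Set.Icc (0:ℝ) 1,
      Filter.Tendsto (fun n => iterV P Vstar n b p) Filter.atTop (nhds (Vstar b p)) := by
    intro b p hp
    have hg : Filter.Tendsto (fun n : ℕ => P.beta ^ n * M) Filter.atTop (nhds 0) := by
      simpa using (tendsto_pow_atTop_nhds_zero_of_lt_one hb0 hb1).mul_const M
    have h0 : Filter.Tendsto (fun n => iterV P Vstar n b p - Vstar b p)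
        Filter.atTop (nhds 0) :=
      squeeze_zero_norm (fun n => by
        simpa [Real.norm_eq_abs] using (key n).2 b p hp) hg
    have := h0.add_const (Vstar b p)
    simpa using this
  -- convexity passes to the limit
  intro b hb
  refine ⟨convex_Icc _ _, fun x hx y hy a c ha hc hac => ?_⟩
  have hz : a • x + c • y ∈ Set.Icc (0:ℝ) 1 := (convex_Icc (0:ℝ) 1) hx hy ha hc hac
  refine le_of_tendsto_of_tendsto' (tend b _ hz) ?_
    (fun n => ((key n).1 b hb).2 hx hy ha hc hac)
  simpa only [smul_eq_mul] using ((tend b x hx).const_mul a).add ((tend b y hy).const_mul c)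
end EH
end

section
/- For every b ∈ 𝔅, the map p ↦ V*(b,p) is continuous on [0,1]. -/
namespace EH

open Params



private lemma convE {q x y E : ℝ} (h0 : 0 ≤ q) (h1 : q ≤ 1) (hx : |x| ≤ E) (hy : |y| ≤ E) :
    |q * x + (1 - q) * y| ≤ E := by
  rcases abs_le.mp hx with ⟨hx1, hx2⟩
  rcases abs_le.mp hy with ⟨hy1, hy2⟩
  rw [abs_le]
  constructor <;> nlinarith

private lemma convS {q x y : ℝ} (h0 : 0 ≤ q) (h1 : q ≤ 1) :
    |q * x + (1 - q) * y| ≤ |x| + |y| :=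
  convE h0 h1 (le_add_of_nonneg_right (abs_nonneg y)) (le_add_of_nonneg_left (abs_nonneg x))

set_option maxHeartbeats 2000000 in
/-- For every b ∈ 𝔅, the map p ↦ V⋆(b,p) is continuous on [0,1]. -/
theorem stmt10 (P : Params) (Vstar : ℝ → ℝ → ℝ)
    (hBdd : P.Bdd Vstar) (hFix : P.IsFixed Vstar) :
    ∀ b ∈ P.Batt, ContinuousOn (fun p => Vstar b p) (Set.Icc (0:ℝ) 1) := by
  classical
  obtain ⟨M0, hM0⟩ := hBdd
  obtain ⟨τ, hτ⟩ : ∃ t : ℝ, P.tau = t := ⟨_, rfl⟩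
  obtain ⟨M, hMM⟩ : ∃ m : ℝ, max M0 0 = m := ⟨_, rfl⟩
  have hM : ∀ b ∈ P.Batt, ∀ p ∈ Belief, |Vstar b p| ≤ M := fun b hb p hp =>
    (hM0 b hb p hp).trans (hMM ▸ le_max_left _ _)
  have hMnn : (0:ℝ) ≤ M := hMM ▸ le_max_right _ _
  have hk1 : (1:ℝ) ≤ P.k := by exact_mod_cast Nat.one_le_of_lt (Nat.lt_of_lt_of_le Nat.one_lt_two P.hk)
  have hkR : (0:ℝ) < P.k := lt_of_lt_of_le one_pos hk1
  have hτpos : 0 < τ := by rw [← hτ]; unfold Params.tau; positivity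
  have hkτ : (P.k : ℝ) * τ = 1 := by rw [← hτ]; unfold Params.tau; field_simp
  have hτ1 : τ ≤ 1 := by nlinarith [mul_nonneg hτpos.le (sub_nonneg.mpr hk1)]
  have hβ0 : 0 ≤ P.beta := P.hbeta.1
  have hβ1 : P.beta < 1 := P.hbeta.2
  have hq0 : 0 ≤ P.q := P.hq.1
  have hq1 : P.q ≤ 1 := P.hq.2
  have hR := P.hR
  obtain ⟨C, hC⟩ : ∃ C : ℕ → ℝ, ∀ j, C j =
      P.R + P.beta * (|Vstar ((j:ℝ)*τ) P.lam1| + |Vstar ((j:ℝ)*τ - 1) P.lam1|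
      + |Vstar (min ((j:ℝ)*τ - τ + 1) (P.Bmax:ℝ)) P.lam0| + |Vstar ((j:ℝ)*τ - τ) P.lam0|
      + |Vstar ((j:ℝ)*τ) P.lam0| + |Vstar ((j:ℝ)*τ - 1) P.lam0|
      + |Vstar ((j:ℝ)*τ - τ + 1) P.lam1| + |Vstar ((j:ℝ)*τ - τ + 1) P.lam0|
      + |Vstar ((j:ℝ)*τ - τ) P.lam1|) := ⟨_, fun j => rfl⟩
  have hCnn : ∀ j, 0 ≤ C j := by
    intro j
    rw [hC j]
    have h1 : 0 ≤ P.beta * (|Vstar ((j:ℝ)*τ) P.lam1| + |Vstar ((j:ℝ)*τ - 1) P.lam1|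
      + |Vstar (min ((j:ℝ)*τ - τ + 1) (P.Bmax:ℝ)) P.lam0| + |Vstar ((j:ℝ)*τ - τ) P.lam0|
      + |Vstar ((j:ℝ)*τ) P.lam0| + |Vstar ((j:ℝ)*τ - 1) P.lam0|
      + |Vstar ((j:ℝ)*τ - τ + 1) P.lam1| + |Vstar ((j:ℝ)*τ - τ + 1) P.lam0|
      + |Vstar ((j:ℝ)*τ - τ) P.lam1|) := mul_nonneg hβ0 (by positivity)
    linarith
  obtain ⟨L, hL0, hCL⟩ : ∃ L : ℝ, 0 ≤ L ∧ ∀ j, j ≤ P.k * P.Bmax → C j ≤ L := by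
    refine ⟨(Finset.range (P.k * P.Bmax + 1)).sup' Finset.nonempty_range_add_one C, ?_, ?_⟩
    · exact le_trans (hCnn 0) (Finset.le_sup' C (Finset.mem_range.mpr (Nat.succ_pos _)))
    · exact fun j hj => Finset.le_sup' C (Finset.mem_range.mpr (Nat.lt_succ_of_le hj))
  have hJmem : ∀ p ∈ Belief, P.J p ∈ Belief := by
    rintro p ⟨h0, h1⟩
    have h2 := P.hlam0.1; have h3 := P.hlam0.2
    have h4 := P.hlam1.1; have h5 := P.hlam1.2
    constructor
    · unfold Params.J; nlinarith
    · unfold Params.J; nlinarith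
  have hJlip : ∀ p p' : ℝ, |P.J p - P.J p'| ≤ |p - p'| := by
    intro p p'
    have he : P.J p - P.J p' = (P.lam1 - P.lam0) * (p - p') := by unfold Params.J; ring
    rw [he, abs_mul]
    have h2 := P.hlam0.1; have h3 := P.hlam0.2
    have h4 := P.hlam1.1; have h5 := P.hlam1.2
    have h6 : |P.lam1 - P.lam0| ≤ 1 := by rw [abs_le]; constructor <;> linarith
    nlinarith [abs_nonneg (p - p')]
  -- key induction
  have key : ∀ n : ℕ, ∀ j : ℕ, j ≤ P.k * P.Bmax → ∀ p ∈ Belief, ∀ p' ∈ Belief,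
      |Vstar ((j:ℝ)*τ) p - Vstar ((j:ℝ)*τ) p'| ≤ L * |p - p'| + P.beta ^ n * (2 * M) := by
    intro n
    induction n with
    | zero =>
      intro j hj p hp p' hp'
      have h1 := hM _ ⟨j, hj, by rw [hτ]⟩ _ hp
      have h2 := hM _ ⟨j, hj, by rw [hτ]⟩ _ hp'
      have h3 := abs_sub (Vstar ((j:ℝ)*τ) p) (Vstar ((j:ℝ)*τ) p')
      have h4 : 0 ≤ L * |p - p'| := mul_nonneg hL0 (abs_nonneg _)
      simp only [pow_zero, one_mul]
      linarith
    | succ n ih =>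
      intro j hj p hp p' hp'
      obtain ⟨b, hbdef⟩ : ∃ b : ℝ, (j:ℝ) * τ = b := ⟨_, rfl⟩
      rw [hbdef]
      have hbB : b ∈ P.Batt := ⟨j, hj, by rw [hτ, hbdef]⟩
      rw [← hFix b hbB p hp, ← hFix b hbB p' hp']
      have hBτ : (P.Bmax:ℝ) = ((P.k * P.Bmax : ℕ):ℝ) * τ := by
        push_cast
        rw [mul_comm (P.k:ℝ), mul_assoc, hkτ, mul_one]
      have hb1c : b + 1 = ((j + P.k : ℕ):ℝ) * τ := by
        push_cast
        rw [add_mul, hkτ, hbdef]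
      have hminmem : min (b + 1) (P.Bmax:ℝ) ∈ P.Batt := by
        refine ⟨min (j + P.k) (P.k * P.Bmax), min_le_right _ _, ?_⟩
        rw [hτ, hb1c, hBτ, Nat.cast_min, min_mul_of_nonneg _ _ hτpos.le]
      have hpow : 0 ≤ P.beta ^ (n+1) * (2 * M) := by positivity
      have hpown : 0 ≤ P.beta ^ n * (2 * M) := by positivity
      -- QD bound
      have hQD : |P.QD Vstar b p - P.QD Vstar b p'| ≤ L * |p - p'| + P.beta ^ (n+1) * (2 * M) := by
        have hJp := hJmem p hp
        have hJp' := hJmem p' hp'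
        have e : P.QD Vstar b p - P.QD Vstar b p'
            = P.beta * (P.q * (Vstar (min (b+1) (P.Bmax:ℝ)) (P.J p)
                - Vstar (min (b+1) (P.Bmax:ℝ)) (P.J p'))
              + (1 - P.q) * (Vstar b (P.J p) - Vstar b (P.J p'))) := by
          unfold Params.QD; ring
        obtain ⟨i, hi, hieq⟩ := hminmem
        rw [hτ] at hieq
        have h1 : |Vstar (min (b+1) (P.Bmax:ℝ)) (P.J p) - Vstar (min (b+1) (P.Bmax:ℝ)) (P.J p')|
            ≤ L * |P.J p - P.J p'| + P.beta ^ n * (2 * M) := by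
          rw [hieq]; exact ih i hi _ hJp _ hJp'
        have h2 : |Vstar b (P.J p) - Vstar b (P.J p')|
            ≤ L * |P.J p - P.J p'| + P.beta ^ n * (2 * M) := by
          rw [← hbdef]; exact ih j hj _ hJp _ hJp'
        have hE : L * |P.J p - P.J p'| + P.beta ^ n * (2 * M)
            ≤ L * |p - p'| + P.beta ^ n * (2 * M) := by
          have h3 := hJlip p p'
          nlinarith [hL0]
        have hconv := convE hq0 hq1 h1 h2
        rw [e, abs_mul, abs_of_nonneg hβ0]
        refine le_trans (mul_le_mul_of_nonneg_left (hconv.trans hE) hβ0) ?_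
        rw [pow_succ]
        nlinarith [mul_nonneg (mul_nonneg (sub_nonneg.mpr hβ1.le) hL0) (abs_nonneg (p - p')),
          mul_nonneg (mul_nonneg hβ0 (pow_nonneg hβ0 n)) (by linarith : (0:ℝ) ≤ 2 * M)]
      have hCL' : C j * |p - p'| ≤ L * |p - p'| + P.beta ^ (n+1) * (2 * M) := by
        have h5 := mul_le_mul_of_nonneg_right (hCL j hj) (abs_nonneg (p - p'))
        linarith
      have hCjb : C j = P.R + P.beta * (|Vstar b P.lam1| + |Vstar (b - 1) P.lam1|
          + |Vstar (min (b - τ + 1) (P.Bmax:ℝ)) P.lam0| + |Vstar (b - τ) P.lam0|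
          + |Vstar b P.lam0| + |Vstar (b - 1) P.lam0|
          + |Vstar (b - τ + 1) P.lam1| + |Vstar (b - τ + 1) P.lam0|
          + |Vstar (b - τ) P.lam1|) := by rw [hC j, hbdef]
      -- QT bound
      have hQT : |P.QT Vstar b p - P.QT Vstar b p'| ≤ C j * |p - p'| := by
        have e : P.QT Vstar b p - P.QT Vstar b p' = (p - p') *
            ((P.R + P.beta * (P.q * Vstar b P.lam1 + (1 - P.q) * Vstar (b-1) P.lam1))
             - P.beta * (P.q * Vstar b P.lam0 + (1 - P.q) * Vstar (b-1) P.lam0)) := by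
          unfold Params.QT; ring
        rw [e, abs_mul, mul_comm]
        refine mul_le_mul_of_nonneg_right ?_ (abs_nonneg _)
        have hA : |P.R + P.beta * (P.q * Vstar b P.lam1 + (1 - P.q) * Vstar (b-1) P.lam1)|
            ≤ P.R + P.beta * (|Vstar b P.lam1| + |Vstar (b-1) P.lam1|) := by
          refine (abs_add_le _ _).trans ?_
          rw [abs_of_pos hR, abs_mul, abs_of_nonneg hβ0]
          have h7 := convS (x := Vstar b P.lam1) (y := Vstar (b-1) P.lam1) hq0 hq1
          nlinarith
        have hB : |P.beta * (P.q * Vstar b P.lam0 + (1 - P.q) * Vstar (b-1) P.lam0)|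
            ≤ P.beta * (|Vstar b P.lam0| + |Vstar (b-1) P.lam0|) := by
          rw [abs_mul, abs_of_nonneg hβ0]
          exact mul_le_mul_of_nonneg_left (convS hq0 hq1) hβ0
        refine (abs_sub _ _).trans ?_
        rw [hCjb]
        nlinarith [mul_nonneg hβ0 (abs_nonneg (Vstar (min (b - τ + 1) (P.Bmax:ℝ)) P.lam0)),
          mul_nonneg hβ0 (abs_nonneg (Vstar (b - τ) P.lam0)),
          mul_nonneg hβ0 (abs_nonneg (Vstar (b - τ + 1) P.lam1)),
          mul_nonneg hβ0 (abs_nonneg (Vstar (b - τ + 1) P.lam0)),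
          mul_nonneg hβ0 (abs_nonneg (Vstar (b - τ) P.lam1))]
      by_cases h1b : (1:ℝ) ≤ b
      · -- QO bound, big battery
        have hQO : |P.QO Vstar b p - P.QO Vstar b p'| ≤ C j * |p - p'| := by
          have e : P.QO Vstar b p - P.QO Vstar b p' = (p - p') *
              (((1 - τ) * P.R + P.beta * (P.q * Vstar b P.lam1 + (1 - P.q) * Vstar (b-1) P.lam1))
               - P.beta * (P.q * Vstar (min (b - τ + 1) (P.Bmax:ℝ)) P.lam0
                  + (1 - P.q) * Vstar (b - τ) P.lam0)) := by
            simp only [Params.QO, if_pos h1b, hτ]; ring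
          rw [e, abs_mul, mul_comm]
          refine mul_le_mul_of_nonneg_right ?_ (abs_nonneg _)
          have hA : |(1 - τ) * P.R + P.beta * (P.q * Vstar b P.lam1 + (1 - P.q) * Vstar (b-1) P.lam1)|
              ≤ P.R + P.beta * (|Vstar b P.lam1| + |Vstar (b-1) P.lam1|) := by
            refine (abs_add_le _ _).trans ?_
            have h7 := convS (x := Vstar b P.lam1) (y := Vstar (b-1) P.lam1) hq0 hq1
            have h8 : |(1 - τ) * P.R| = (1 - τ) * P.R := by
              exact abs_of_nonneg (mul_nonneg (by linarith) hR.le)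
            rw [h8, abs_mul, abs_of_nonneg hβ0]
            nlinarith [hτpos.le, mul_nonneg hτpos.le hR.le]
          have hB : |P.beta * (P.q * Vstar (min (b - τ + 1) (P.Bmax:ℝ)) P.lam0
                + (1 - P.q) * Vstar (b - τ) P.lam0)|
              ≤ P.beta * (|Vstar (min (b - τ + 1) (P.Bmax:ℝ)) P.lam0| + |Vstar (b - τ) P.lam0|) := by
            rw [abs_mul, abs_of_nonneg hβ0]
            exact mul_le_mul_of_nonneg_left (convS hq0 hq1) hβ0
          refine (abs_sub _ _).trans ?_
          rw [hCjb]
          nlinarith [mul_nonneg hβ0 (abs_nonneg (Vstar b P.lam0)),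
            mul_nonneg hβ0 (abs_nonneg (Vstar (b - 1) P.lam0)),
            mul_nonneg hβ0 (abs_nonneg (Vstar (b - τ + 1) P.lam1)),
            mul_nonneg hβ0 (abs_nonneg (Vstar (b - τ + 1) P.lam0)),
            mul_nonneg hβ0 (abs_nonneg (Vstar (b - τ) P.lam1))]
        simp only [Params.bellman, if_pos h1b]
        refine le_trans (abs_max_sub_max_le_max _ _ _ _) (max_le hQD ?_)
        exact le_trans (abs_max_sub_max_le_max _ _ _ _)
          (max_le (hQO.trans hCL') (hQT.trans hCL'))
      · by_cases hτb : τ ≤ b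
        · -- QO bound, small battery
          have hQO : |P.QO Vstar b p - P.QO Vstar b p'| ≤ C j * |p - p'| := by
            have e : P.QO Vstar b p - P.QO Vstar b p' = (p - p') *
                (P.beta * (P.q * (Vstar (b - τ + 1) P.lam1 - Vstar (b - τ + 1) P.lam0)
                  + (1 - P.q) * (Vstar (b - τ) P.lam1 - Vstar (b - τ) P.lam0))) := by
              simp only [Params.QO, if_neg h1b, hτ]; ring
            rw [e, abs_mul, mul_comm]
            refine mul_le_mul_of_nonneg_right ?_ (abs_nonneg _)
            rw [abs_mul, abs_of_nonneg hβ0]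
            have h7 := convS (x := Vstar (b - τ + 1) P.lam1 - Vstar (b - τ + 1) P.lam0)
              (y := Vstar (b - τ) P.lam1 - Vstar (b - τ) P.lam0) hq0 hq1
            have h8 := abs_sub (Vstar (b - τ + 1) P.lam1) (Vstar (b - τ + 1) P.lam0)
            have h9 := abs_sub (Vstar (b - τ) P.lam1) (Vstar (b - τ) P.lam0)
            have h10 : P.beta * |P.q * (Vstar (b - τ + 1) P.lam1 - Vstar (b - τ + 1) P.lam0)
                  + (1 - P.q) * (Vstar (b - τ) P.lam1 - Vstar (b - τ) P.lam0)|
                ≤ P.beta * (|Vstar (b - τ + 1) P.lam1| + |Vstar (b - τ + 1) P.lam0|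
                    + (|Vstar (b - τ) P.lam1| + |Vstar (b - τ) P.lam0|)) :=
              mul_le_mul_of_nonneg_left (by linarith) hβ0
            refine h10.trans ?_
            rw [hCjb]
            nlinarith [mul_nonneg hβ0 (abs_nonneg (Vstar b P.lam1)),
              mul_nonneg hβ0 (abs_nonneg (Vstar (b - 1) P.lam1)),
              mul_nonneg hβ0 (abs_nonneg (Vstar (min (b - τ + 1) (P.Bmax:ℝ)) P.lam0)),
              mul_nonneg hβ0 (abs_nonneg (Vstar b P.lam0)),
              mul_nonneg hβ0 (abs_nonneg (Vstar (b - 1) P.lam0))]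
          simp only [Params.bellman, if_neg h1b, hτ, if_pos hτb]
          exact le_trans (abs_max_sub_max_le_max _ _ _ _) (max_le hQD (hQO.trans hCL'))
        · simp only [Params.bellman, if_neg h1b, hτ, if_neg hτb]
          exact hQD
  -- conclude continuity via Lipschitz
  rintro b ⟨j, hj, rfl⟩
  rw [hτ]
  have hlip : ∀ p ∈ Set.Icc (0:ℝ) 1, ∀ p' ∈ Set.Icc (0:ℝ) 1,
      |Vstar ((j:ℝ)*τ) p - Vstar ((j:ℝ)*τ) p'| ≤ L * |p - p'| := by
    intro p hp p' hp'
    have htend : Filter.Tendsto (fun n : ℕ => L * |p - p'| + P.beta ^ n * (2 * M)) Filter.atTop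
        (nhds (L * |p - p'| + 0 * (2 * M))) :=
      tendsto_const_nhds.add ((tendsto_pow_atTop_nhds_zero_of_lt_one hβ0 hβ1).mul_const _)
    rw [zero_mul, add_zero] at htend
    exact ge_of_tendsto' htend (fun n => key n j hj p hp p' hp')
  have hlw : LipschitzOnWith (Real.toNNReal L) (fun p => Vstar ((j:ℝ)*τ) p) (Set.Icc (0:ℝ) 1) := by
    rw [lipschitzOnWith_iff_dist_le_mul]
    intro x hx y hy
    rw [Real.dist_eq, Real.dist_eq, Real.coe_toNNReal L hL0]
    exact hlip x hx y hy
  exact hlw.continuousOn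

end EH
end
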